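/- (Schur test, specific kernel) For fixed 0 ≤ a < 1, the integral kernel k(s₁, s₂) = (s₂ - a)^{-1} · 1_{s₂ > s₁} on [a, 1]² defines a bounded linear operator on L²([a, 1]) with operator norm at most 4. -/

import Mathlib

/-!
The kernel is that of the adjoint of Hardy's averaging operator `g ↦ (t - a)⁻¹ ∫_a^t g`.
Schur's test with `p(s) = q(s) = (s - a)^(-1/2)` applies with both constants equal to `2`:
`∫_s^1 (t - a)^(-3/2) dt ≤ 2 (s - a)^(-1/2)` and
`(t - a)⁻¹ ∫_a^t (s - a)^(-1/2) ds = 2 (t - a)^(-1/2)`.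
In the test, the weighted Cauchy–Schwarz inequality `(∫ k F)² ≤ (∫ k p) (∫ k F² / p)` bounds
`(∫ k F)²` pointwise, and after Tonelli the second bound applies, so `‖K‖ ≤ √(2 · 2) = 2`.
The same `L²` bound for `|k|` makes `k(x, ·) f` integrable for a.e. `x`, which is what makes the
integral operator linear on `L²` classes.
-/
open MeasureTheory Set Function
open scoped ENNReal NNReal

section Schur

variable {α β : Type*} [MeasurableSpace α] [MeasurableSpace β] {μ : Measure α} {ν : Measure β}

theorem sq_lintegral_mul_le_lintegral_mul_mul_lintegral_sq_div {w p F : β → ℝ≥0∞}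
    (hw : AEMeasurable w ν) (hp : AEMeasurable p ν) (hF : AEMeasurable F ν)
    (hp0 : ∀ᵐ y ∂ν, p y ≠ 0) (hp_top : ∀ᵐ y ∂ν, p y ≠ ∞) :
    (∫⁻ y, w y * F y ∂ν) ^ 2 ≤ (∫⁻ y, w y * p y ∂ν) * ∫⁻ y, w y * (F y ^ 2 / p y) ∂ν := by
  have hsq_sqrt : ∀ x : ℝ≥0∞, (x ^ (2⁻¹ : ℝ)) ^ (2 : ℝ) = x := fun x => by
    rw [← ENNReal.rpow_mul]; norm_num
  have hfactor : (fun y => w y * F y) =ᵐ[ν]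
      (fun y => (w y * p y) ^ (2⁻¹ : ℝ)) * fun y => (w y * (F y ^ 2 / p y)) ^ (2⁻¹ : ℝ) := by
    filter_upwards [hp0, hp_top] with y h0 htop
    rw [Pi.mul_apply, ← ENNReal.mul_rpow_of_nonneg _ _ (by norm_num),
      show w y * p y * (w y * (F y ^ 2 / p y)) = (w y * F y) ^ (2 : ℝ) by
        rw [ENNReal.rpow_two, mul_mul_mul_comm, ENNReal.mul_div_cancel h0 htop]; ring,
      ← ENNReal.rpow_mul]
    norm_num
  have hCS := ENNReal.lintegral_mul_le_Lp_mul_Lq ν Real.HolderConjugate.two_two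
    ((hw.mul hp).pow_const (2⁻¹ : ℝ)) ((hw.mul ((hF.pow_const 2).div hp)).pow_const (2⁻¹ : ℝ))
  simp only [hsq_sqrt, one_div] at hCS
  rw [lintegral_congr_ae hfactor, ← ENNReal.rpow_two]
  calc _ ≤ ((∫⁻ y, w y * p y ∂ν) ^ (2⁻¹ : ℝ) * (∫⁻ y, w y * (F y ^ 2 / p y) ∂ν) ^ (2⁻¹ : ℝ))
        ^ (2 : ℝ) := by gcongr; exact hCS
    _ = _ := by rw [ENNReal.mul_rpow_of_nonneg _ _ (by norm_num), hsq_sqrt, hsq_sqrt]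

theorem lintegral_sq_lintegral_mul_le_of_schur_test [SFinite μ] [SFinite ν]
    {K : α → β → ℝ≥0∞} (hK : Measurable (uncurry K)) {p : β → ℝ≥0∞} {q : α → ℝ≥0∞}
    (hp : AEMeasurable p ν) (hq : AEMeasurable q μ)
    (hp0 : ∀ᵐ y ∂ν, p y ≠ 0) (hp_top : ∀ᵐ y ∂ν, p y ≠ ∞) {A B : ℝ≥0∞}
    (hA : ∀ᵐ x ∂μ, ∫⁻ y, K x y * p y ∂ν ≤ A * q x)
    (hB : ∀ᵐ y ∂ν, ∫⁻ x, q x * K x y ∂μ ≤ B * p y)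
    {F : β → ℝ≥0∞} (hF : AEMeasurable F ν) :
    ∫⁻ x, (∫⁻ y, K x y * F y ∂ν) ^ 2 ∂μ ≤ A * B * ∫⁻ y, F y ^ 2 ∂ν := by
  set G : β → ℝ≥0∞ := fun y => F y ^ 2 / p y
  have hG : AEMeasurable G ν := (hF.pow_const 2).div hp
  have hKG : AEMeasurable (uncurry fun x y => q x * K x y * G y) (μ.prod ν) :=
    (hq.comp_fst.mul hK.aemeasurable).mul hG.comp_snd
  calc ∫⁻ x, (∫⁻ y, K x y * F y ∂ν) ^ 2 ∂μ
      ≤ ∫⁻ x, A * ∫⁻ y, q x * K x y * G y ∂ν ∂μ := by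
        refine lintegral_mono_ae (hA.mono fun x hx => ?_)
        have hKx : AEMeasurable (K x) ν := (hK.comp measurable_prodMk_left).aemeasurable
        calc (∫⁻ y, K x y * F y ∂ν) ^ 2
            ≤ (∫⁻ y, K x y * p y ∂ν) * ∫⁻ y, K x y * G y ∂ν :=
              sq_lintegral_mul_le_lintegral_mul_mul_lintegral_sq_div hKx hp hF hp0 hp_top
          _ ≤ A * q x * ∫⁻ y, K x y * G y ∂ν := by gcongr
          _ = A * ∫⁻ y, q x * K x y * G y ∂ν := by
              rw [mul_assoc,
                ← lintegral_const_mul'' (q x) (f := fun y => K x y * G y) (hKx.mul hG)]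
              simp only [mul_assoc]
    _ = A * ∫⁻ y, (∫⁻ x, q x * K x y ∂μ) * G y ∂ν := by
        rw [lintegral_const_mul'' A (f := fun x => ∫⁻ y, q x * K x y * G y ∂ν)
          hKG.lintegral_prod_right', lintegral_lintegral_swap hKG]
        congr 1
        refine lintegral_congr fun y => ?_
        exact lintegral_mul_const'' _ (hq.mul (hK.comp measurable_prodMk_right).aemeasurable)
    _ ≤ A * ∫⁻ y, B * p y * G y ∂ν := by
        gcongr A * ?_
        exact lintegral_mono_ae (hB.mono fun y hy => by gcongr)
    _ = A * B * ∫⁻ y, F y ^ 2 ∂ν := by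
        rw [mul_assoc, ← lintegral_const_mul'' _ (hF.pow_const 2)]
        congr 1
        refine lintegral_congr_ae ?_
        filter_upwards [hp0, hp_top] with y h0 htop
        rw [mul_assoc, ENNReal.mul_div_cancel h0 htop]

end Schur

section KernelOperator

variable {𝕜 α β : Type*} [RCLike 𝕜] [MeasurableSpace α] [MeasurableSpace β]
  {μ : Measure α} {ν : Measure β} {k : α → β → 𝕜} {C : ℝ≥0}

theorem eLpNorm_integral_kernel_mul_le
    (hC : ∀ F : β → ℝ≥0∞, AEMeasurable F ν →
      ∫⁻ x, (∫⁻ y, ‖k x y‖ₑ * F y ∂ν) ^ 2 ∂μ ≤ C ^ 2 * ∫⁻ y, F y ^ 2 ∂ν)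
    {f : β → 𝕜} (hf : AEStronglyMeasurable f ν) :
    eLpNorm (fun x => ∫ y, k x y * f y ∂ν) 2 μ ≤ C * eLpNorm f 2 ν := by
  have hpointwise (x : α) : ‖∫ y, k x y * f y ∂ν‖ₑ ≤ ∫⁻ y, ‖k x y‖ₑ * ‖f y‖ₑ ∂ν :=
    (enorm_integral_le_lintegral_enorm _).trans_eq (by simp only [enorm_mul])
  have hsq : ∫⁻ x, ‖∫ y, k x y * f y ∂ν‖ₑ ^ 2 ∂μ ≤ C ^ 2 * ∫⁻ y, ‖f y‖ₑ ^ 2 ∂ν :=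
    (lintegral_mono fun x => pow_le_pow_left' (hpointwise x) 2).trans (hC _ hf.enorm)
  simp only [eLpNorm_eq_lintegral_rpow_enorm_toReal two_ne_zero ENNReal.ofNat_ne_top,
    ENNReal.toReal_ofNat, ENNReal.rpow_two]
  calc (∫⁻ x, ‖∫ y, k x y * f y ∂ν‖ₑ ^ 2 ∂μ) ^ (1 / 2 : ℝ)
      ≤ (C ^ 2 * ∫⁻ y, ‖f y‖ₑ ^ 2 ∂ν) ^ (1 / 2 : ℝ) := by gcongr
    _ = C * (∫⁻ y, ‖f y‖ₑ ^ 2 ∂ν) ^ (1 / 2 : ℝ) := by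
      rw [ENNReal.mul_rpow_of_nonneg _ _ (by norm_num), ← ENNReal.rpow_two, ← ENNReal.rpow_mul]
      norm_num

theorem ae_integrable_mul_of_memLp_two [SFinite ν]
    (hk : StronglyMeasurable (uncurry k))
    (hC : ∀ F : β → ℝ≥0∞, AEMeasurable F ν →
      ∫⁻ x, (∫⁻ y, ‖k x y‖ₑ * F y ∂ν) ^ 2 ∂μ ≤ C ^ 2 * ∫⁻ y, F y ^ 2 ∂ν)
    {f : β → 𝕜} (hf : MemLp f 2 ν) :
    ∀ᵐ x ∂μ, Integrable (fun y => k x y * f y) ν := by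
  have hfin : ∫⁻ x, (∫⁻ y, ‖k x y‖ₑ * ‖f y‖ₑ ∂ν) ^ 2 ∂μ ≠ ∞ := by
    refine ne_top_of_le_ne_top (ENNReal.mul_ne_top (by simp) ?_) (hC _ hf.1.enorm)
    simpa [ENNReal.rpow_two] using (lintegral_rpow_enorm_lt_top_of_eLpNorm_lt_top two_ne_zero
      ENNReal.ofNat_ne_top hf.eLpNorm_lt_top).ne
  have hmeas : AEMeasurable (fun x => (∫⁻ y, ‖k x y‖ₑ * ‖f y‖ₑ ∂ν) ^ 2) μ :=
    (hk.measurable.enorm.aemeasurable.mul hf.1.enorm.comp_snd).lintegral_prod_right'.pow_const 2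
  filter_upwards [ae_lt_top' hmeas hfin] with x hx
  refine ⟨(hk.comp_measurable measurable_prodMk_left).aestronglyMeasurable.mul hf.1, ?_⟩
  simpa [HasFiniteIntegral, enorm_mul] using hx

theorem exists_clm_Lp_two_integral_kernel [SFinite ν]
    (hk : StronglyMeasurable (uncurry k))
    (hC : ∀ F : β → ℝ≥0∞, AEMeasurable F ν →
      ∫⁻ x, (∫⁻ y, ‖k x y‖ₑ * F y ∂ν) ^ 2 ∂μ ≤ C ^ 2 * ∫⁻ y, F y ^ 2 ∂ν) :
    ∃ T : Lp 𝕜 2 ν →L[𝕜] Lp 𝕜 2 μ, ‖T‖ ≤ C ∧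
      ∀ f : Lp 𝕜 2 ν, T f =ᵐ[μ] fun x => ∫ y, k x y * f y ∂ν := by
  have hmem (f : Lp 𝕜 2 ν) : MemLp (fun x => ∫ y, k x y * f y ∂ν) 2 μ :=
    ⟨(hk.aestronglyMeasurable.mul (Lp.aestronglyMeasurable f).comp_snd).integral_prod_right',
      (eLpNorm_integral_kernel_mul_le hC (Lp.aestronglyMeasurable f)).trans_lt
        (ENNReal.mul_lt_top ENNReal.coe_lt_top (Lp.eLpNorm_lt_top f))⟩
  let L : Lp 𝕜 2 ν →ₗ[𝕜] Lp 𝕜 2 μ :=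
    { toFun f := (hmem f).toLp _
      map_add' f g := by
        rw [← MemLp.toLp_add]
        refine MemLp.toLp_congr _ _ ?_
        filter_upwards [ae_integrable_mul_of_memLp_two hk hC (Lp.memLp f),
          ae_integrable_mul_of_memLp_two hk hC (Lp.memLp g)] with x hfx hgx
        rw [Pi.add_apply, ← integral_add hfx hgx]
        refine integral_congr_ae ?_
        filter_upwards [Lp.coeFn_add f g] with y hy
        rw [hy, Pi.add_apply, mul_add]
      map_smul' c f := by
        rw [RingHom.id_apply, ← MemLp.toLp_const_smul]
        refine MemLp.toLp_congr _ _ (Filter.Eventually.of_forall fun x => ?_)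
        rw [Pi.smul_apply, smul_eq_mul, ← integral_const_mul]
        refine integral_congr_ae ?_
        filter_upwards [Lp.coeFn_smul c f] with y hy
        rw [hy, Pi.smul_apply, smul_eq_mul, mul_left_comm] }
  have hL (f : Lp 𝕜 2 ν) : ‖L f‖ ≤ C * ‖f‖ := by
    change ‖(hmem f).toLp _‖ ≤ _
    rw [Lp.norm_toLp, Lp.norm_def, ← ENNReal.coe_toReal, ← ENNReal.toReal_mul]
    exact ENNReal.toReal_mono (ENNReal.mul_ne_top ENNReal.coe_ne_top (Lp.eLpNorm_ne_top f))
      (eLpNorm_integral_kernel_mul_le hC (Lp.aestronglyMeasurable f))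
  exact ⟨L.mkContinuous C hL, L.mkContinuous_norm_le C.coe_nonneg hL,
    fun f => (hmem f).coeFn_toLp⟩

end KernelOperator

theorem integral_sub_rpow_neg_three_halves {a s b : ℝ} (has : a < s) (hsb : s ≤ b) :
    ∫ t in s..b, (t - a) ^ (-(3 / 2) : ℝ)
      = 2 * (s - a) ^ (-(1 / 2) : ℝ) - 2 * (b - a) ^ (-(1 / 2) : ℝ) := by
  rw [intervalIntegral.integral_comp_sub_right (fun t => t ^ (-(3 / 2) : ℝ)),
    integral_rpow (Or.inr ⟨by norm_num, notMem_uIcc_of_lt (by linarith) (by linarith)⟩)]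
  norm_num
  ring

theorem integral_sub_rpow_neg_half {a s : ℝ} :
    ∫ t in a..s, (t - a) ^ (-(1 / 2) : ℝ) = 2 * (s - a) ^ (1 / 2 : ℝ) := by
  rw [intervalIntegral.integral_comp_sub_right (fun t => t ^ (-(1 / 2) : ℝ)), sub_self,
    integral_rpow (Or.inl (by norm_num)), Real.zero_rpow (by norm_num)]
  norm_num
  ring

noncomputable def hardyAdjointKernel (a s t : ℝ) : ℝ := if s < t then (t - a)⁻¹ else 0

noncomputable def invSqrtWeight (a t : ℝ) : ℝ≥0∞ := ENNReal.ofReal ((t - a) ^ (-(1 / 2) : ℝ))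

theorem lintegral_enorm_hardyAdjointKernel_mul_invSqrtWeight_le {a b s : ℝ} (has : a < s)
    (hsb : s ≤ b) :
    ∫⁻ t in Icc a b, ‖hardyAdjointKernel a s t‖ₑ * invSqrtWeight a t ≤ 2 * invSqrtWeight a s := by
  have hintegrand (t : ℝ) : ‖hardyAdjointKernel a s t‖ₑ * invSqrtWeight a t
      = (Ioi s).indicator (fun t => ENNReal.ofReal ((t - a) ^ (-(3 / 2) : ℝ))) t := by
    by_cases hst : s < t
    · have hta : 0 < t - a := by linarith
      rw [indicator_of_mem (mem_Ioi.2 hst), hardyAdjointKernel, if_pos hst,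
        Real.enorm_eq_ofReal (inv_nonneg.2 hta.le), invSqrtWeight,
        ← ENNReal.ofReal_mul (inv_nonneg.2 hta.le), ← Real.rpow_neg_one, ← Real.rpow_add hta]
      norm_num
    · simp [hardyAdjointKernel, hst]
  have hset : Ioi s ∩ Icc a b = Ioc s b := by
    ext t
    simp only [mem_inter_iff, mem_Ioi, mem_Icc, mem_Ioc]
    constructor
    · rintro ⟨hst, -, htb⟩; exact ⟨hst, htb⟩
    · rintro ⟨hst, htb⟩; exact ⟨hst, by linarith, htb⟩
  have hint : IntegrableOn (fun t => (t - a) ^ (-(3 / 2) : ℝ)) (Ioc s b) := by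
    refine (ContinuousOn.integrableOn_Icc ?_).mono_set Ioc_subset_Icc_self
    exact (continuousOn_id.sub continuousOn_const).rpow_const
      fun t ht => Or.inl (sub_pos.2 (has.trans_le ht.1)).ne'
  have hnonneg : 0 ≤ (b - a) ^ (-(1 / 2) : ℝ) := Real.rpow_nonneg (by linarith) _
  simp_rw [hintegrand]
  rw [lintegral_indicator measurableSet_Ioi, Measure.restrict_restrict measurableSet_Ioi, hset,
    ← ofReal_integral_eq_lintegral_ofReal hint (ae_restrict_of_forall_mem measurableSet_Ioc
      fun t ht => Real.rpow_nonneg (by linarith [ht.1]) _),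
    ← intervalIntegral.integral_of_le hsb, integral_sub_rpow_neg_three_halves has hsb,
    invSqrtWeight, ← ENNReal.ofReal_ofNat 2, ← ENNReal.ofReal_mul zero_le_two]
  exact ENNReal.ofReal_le_ofReal (by linarith)

theorem lintegral_invSqrtWeight_mul_enorm_hardyAdjointKernel_le {a b t : ℝ} (hat : a < t) :
    ∫⁻ s in Icc a b, invSqrtWeight a s * ‖hardyAdjointKernel a s t‖ₑ ≤ 2 * invSqrtWeight a t := by
  have hta : 0 < t - a := by linarith
  have hintegrand (s : ℝ) : invSqrtWeight a s * ‖hardyAdjointKernel a s t‖ₑ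
      = (Iio t).indicator (fun s => invSqrtWeight a s * ENNReal.ofReal (t - a)⁻¹) s := by
    by_cases hst : s < t
    · rw [indicator_of_mem (mem_Iio.2 hst), hardyAdjointKernel, if_pos hst,
        Real.enorm_eq_ofReal (inv_nonneg.2 hta.le)]
    · simp [hardyAdjointKernel, hst]
  have hint : IntegrableOn (fun s => (s - a) ^ (-(1 / 2) : ℝ)) (Ioc a t) := by
    rw [← intervalIntegrable_iff_integrableOn_Ioc_of_le hat.le]
    simpa using (intervalIntegral.intervalIntegrable_rpow' (a := 0) (b := t - a)
      (r := -(1 / 2)) (by norm_num)).comp_sub_right a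
  simp_rw [hintegrand]
  rw [lintegral_indicator measurableSet_Iio, Measure.restrict_restrict measurableSet_Iio]
  calc ∫⁻ s in Iio t ∩ Icc a b, invSqrtWeight a s * ENNReal.ofReal (t - a)⁻¹
      ≤ ∫⁻ s in Ioc a t, invSqrtWeight a s * ENNReal.ofReal (t - a)⁻¹ := by
        rw [← Measure.restrict_congr_set Ico_ae_eq_Ioc]
        exact lintegral_mono_set fun s hs => ⟨hs.2.1, hs.1⟩
    _ = 2 * invSqrtWeight a t := by
        simp only [invSqrtWeight]
        rw [lintegral_mul_const' _ _ ENNReal.ofReal_ne_top,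
          ← ofReal_integral_eq_lintegral_ofReal hint (ae_restrict_of_forall_mem measurableSet_Ioc
            fun s hs => Real.rpow_nonneg (by linarith [hs.1]) _),
          ← intervalIntegral.integral_of_le hat.le, integral_sub_rpow_neg_half,
          ← ENNReal.ofReal_mul (by positivity), ← ENNReal.ofReal_ofNat 2,
          ← ENNReal.ofReal_mul zero_le_two, mul_assoc, ← Real.rpow_neg_one,
          ← Real.rpow_add hta]
        norm_num

theorem measurable_hardyAdjointKernel (a : ℝ) : Measurable (uncurry (hardyAdjointKernel a)) :=
  Measurable.ite (measurableSet_lt measurable_fst measurable_snd)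
    (measurable_snd.sub_const a).inv measurable_const

theorem measurable_invSqrtWeight (a : ℝ) : Measurable (invSqrtWeight a) :=
  ENNReal.measurable_ofReal.comp ((measurable_id.sub_const a).pow_const _)

theorem lintegral_sq_lintegral_enorm_hardyAdjointKernel_mul_le (a b : ℝ) {F : ℝ → ℝ≥0∞}
    (hF : AEMeasurable F (volume.restrict (Icc a b))) :
    ∫⁻ s in Icc a b, (∫⁻ t in Icc a b, ‖hardyAdjointKernel a s t‖ₑ * F t) ^ 2
      ≤ 2 ^ 2 * ∫⁻ t in Icc a b, F t ^ 2 := by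
  have hIoc : ∀ᵐ s ∂volume.restrict (Icc a b), s ∈ Ioc a b := by
    rw [← Measure.restrict_congr_set Ioc_ae_eq_Icc]
    exact ae_restrict_mem measurableSet_Ioc
  have hweight := (measurable_invSqrtWeight a).aemeasurable (μ := volume.restrict (Icc a b))
  have hschur := lintegral_sq_lintegral_mul_le_of_schur_test
    (K := fun s t => ‖hardyAdjointKernel a s t‖ₑ) (measurable_hardyAdjointKernel a).enorm
    hweight hweight
    (hIoc.mono fun s hs => (ENNReal.ofReal_pos.2 (Real.rpow_pos_of_pos (sub_pos.2 hs.1) _)).ne')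
    (Filter.Eventually.of_forall fun s => ENNReal.ofReal_ne_top)
    (hIoc.mono fun s hs => lintegral_enorm_hardyAdjointKernel_mul_invSqrtWeight_le hs.1 hs.2)
    (hIoc.mono fun t ht => lintegral_invSqrtWeight_mul_enorm_hardyAdjointKernel_le ht.1) hF
  exact hschur.trans_eq (by ring)

theorem schur_kernel_bounded (a : ℝ) :
    ∃ T : Lp ℝ 2 (volume.restrict (Icc a 1)) →L[ℝ] Lp ℝ 2 (volume.restrict (Icc a 1)),
      ‖T‖ ≤ 4 ∧
      ∀ f : Lp ℝ 2 (volume.restrict (Icc a 1)),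
        ∀ᵐ s₁ ∂(volume.restrict (Icc a 1)),
          T f s₁ = ∫ s₂ in Icc a 1,
            (if s₁ < s₂ then (s₂ - a)⁻¹ else 0) * f s₂ := by
  obtain ⟨T, hT_norm, hT⟩ := exists_clm_Lp_two_integral_kernel (C := 2)
    (measurable_hardyAdjointKernel a).stronglyMeasurable
    fun F hF => by exact_mod_cast lintegral_sq_lintegral_enorm_hardyAdjointKernel_mul_le a 1 hF
  exact ⟨T, hT_norm.trans (by norm_num), hT⟩
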